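/- The average participation solution AP satisfies relative c-participation monotonicity: for all games u, v with u(∅) = v(∅) = 0 such that c(u, j) = c(v, j) for every agent j, and all agents i, k such that c(u, i) = c(u, k) and u(S ∪ {i}) − v(S ∪ {i}) ≥ u(S ∪ {k}) − v(S ∪ {k}) for every S ⊆ N \ {i, k}, it holds that AP_i(u) − AP_i(v) ≥ AP_k(u) − AP_k(v). -/

import Mathlib

open Finset
open scoped Classical

/-- A monotone game on agent set `Fin n`: `u ∅ = 0` and `u` is monotone w.r.t. inclusion. -/
def IsMonotoneGame (n : ℕ) (u : Finset (Fin n) → ℝ) : Prop :=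
  u ∅ = 0 ∧ ∀ S T : Finset (Fin n), S ⊆ T → u S ≤ u T

/-- The contribution indicator: `c(u,i) = 0` if `u (S ∪ {i}) = u S` for every `S`,
and `c(u,i) = 1` otherwise. -/
noncomputable def contrib {n : ℕ} (u : Finset (Fin n) → ℝ) (i : Fin n) : ℝ :=
  if ∀ S : Finset (Fin n), u (insert i S) = u S then 0 else 1

/-- The average participation solution
`AP_i(u) = ∑_{S ⊆ N \ {i}} w ⬝ (c(u,i) / (∑_{j ∈ S} c(u,j) + 1)) ⬝ u (S ∪ {i})`,
where `w = 1 / (2 ^ n - 1)`. -/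
noncomputable def AP {n : ℕ} (u : Finset (Fin n) → ℝ) (i : Fin n) : ℝ :=
  ∑ S ∈ (Finset.univ.erase i).powerset,
    (1 / (2 ^ n - 1 : ℝ)) * (contrib u i / ((∑ j ∈ S, contrib u j) + 1)) * u (insert i S)

/-
Since `u` and `v` have the same contribution indicators, `AP_x(u) - AP_x(v)` is the same
weighted sum as `AP_x`, applied to the game `u - v`. Split the sum for agent `i` (resp. `k`)
according to whether the coalition contains `k` (resp. `i`). Coalitions containing the other
agent give the same terms on both sides, because `c(u, i) = c(u, k)` makes the weights
`c_i / (c_k + ∑_T c + 1)` and `c_k / (c_i + ∑_T c + 1)` agree; on the coalitions avoiding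
both agents the hypothesis compares the terms one by one, with the same nonnegative weight.
-/

section ParticipationSum

variable {α : Type*} [Fintype α] [DecidableEq α]

/-- `AP` without its factor `1 / (2 ^ n - 1)`, with weights `c` in place of `contrib u`. -/
noncomputable def participationSum (c : α → ℝ) (D : Finset α → ℝ) (x : α) : ℝ :=
  ∑ S ∈ (univ.erase x).powerset, c x / (∑ j ∈ S, c j + 1) * D (insert x S)

lemma participationSum_sub (c : α → ℝ) (D E : Finset α → ℝ) (x : α) :
    participationSum c (D - E) x = participationSum c D x - participationSum c E x := by
  simp only [participationSum, Pi.sub_apply, mul_sub, sum_sub_distrib]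

lemma participationSum_eq_sum_powerset_erase_erase (c : α → ℝ) (D : Finset α → ℝ)
    {i k : α} (hik : i ≠ k) :
    participationSum c D i = ∑ T ∈ ((univ.erase i).erase k).powerset,
      (c i / (∑ j ∈ T, c j + 1) * D (insert i T) +
        c i / (c k + ∑ j ∈ T, c j + 1) * D (insert i (insert k T))) := by
  have hk : k ∉ (univ.erase i).erase k := notMem_erase k _
  rw [participationSum]
  conv_lhs => rw [← insert_erase (mem_erase.2 ⟨hik.symm, mem_univ k⟩)]
  rw [sum_powerset_insert hk, ← sum_add_distrib]
  refine sum_congr rfl fun T hT => ?_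
  have hkT : k ∉ T := fun h => hk (mem_powerset.1 hT h)
  rw [sum_insert hkT]

lemma participationSum_le_participationSum {c : α → ℝ} (hc : ∀ j, 0 ≤ c j)
    {D : Finset α → ℝ} {i k : α} (hik : c i = c k)
    (hD : ∀ S : Finset α, i ∉ S → k ∉ S → D (insert k S) ≤ D (insert i S)) :
    participationSum c D k ≤ participationSum c D i := by
  rcases eq_or_ne i k with rfl | hne
  · rfl
  rw [participationSum_eq_sum_powerset_erase_erase c D hne,
    participationSum_eq_sum_powerset_erase_erase c D hne.symm, erase_right_comm]
  refine sum_le_sum fun T hT => ?_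
  have hiT : i ∉ T := fun h => notMem_erase i _ (mem_of_mem_erase (mem_powerset.1 hT h))
  have hkT : k ∉ T := fun h => notMem_erase k _ (mem_powerset.1 hT h)
  have hweight : 0 ≤ c k / (∑ j ∈ T, c j + 1) :=
    div_nonneg (hc k) (add_nonneg (sum_nonneg fun j _ => hc j) zero_le_one)
  rw [hik, Finset.insert_comm]
  gcongr
  exact hD T hiT hkT

end ParticipationSum

lemma contrib_nonneg {n : ℕ} (u : Finset (Fin n) → ℝ) (j : Fin n) : 0 ≤ contrib u j := by
  unfold contrib
  split_ifs <;> norm_num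

lemma AP_eq_mul_participationSum {n : ℕ} (u : Finset (Fin n) → ℝ) (x : Fin n) :
    AP u x = 1 / (2 ^ n - 1 : ℝ) * participationSum (contrib u) u x := by
  simp only [AP, participationSum, mul_sum, mul_assoc]

theorem ap_RcParM_general (n : ℕ)
    (u v : Finset (Fin n) → ℝ)
    (hc : ∀ j : Fin n, contrib u j = contrib v j) (i k : Fin n)
    (hik : contrib u i = contrib u k)
    (h : ∀ S : Finset (Fin n), i ∉ S → k ∉ S →
      u (insert i S) - v (insert i S) ≥ u (insert k S) - v (insert k S)) :
    AP u i - AP v i ≥ AP u k - AP v k := by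
  have hw : 0 ≤ 1 / (2 ^ n - 1 : ℝ) :=
    one_div_nonneg.2 (sub_nonneg.2 (one_le_pow₀ one_le_two))
  have hcv : contrib v = contrib u := funext fun j => (hc j).symm
  have hdiff : ∀ x, AP u x - AP v x =
      1 / (2 ^ n - 1 : ℝ) * participationSum (contrib u) (u - v) x := fun x => by
    rw [AP_eq_mul_participationSum, AP_eq_mul_participationSum, hcv, participationSum_sub,
      mul_sub]
  rw [ge_iff_le, hdiff, hdiff]
  exact mul_le_mul_of_nonneg_left
    (participationSum_le_participationSum (contrib_nonneg u) hik h) hw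

/-- The average participation solution satisfies relative c-participation monotonicity. -/
theorem ap_RcParM (n : ℕ) (hn : 1 ≤ n)
    (u v : Finset (Fin n) → ℝ) (hu : u ∅ = 0) (hv : v ∅ = 0)
    (hc : ∀ j : Fin n, contrib u j = contrib v j) (i k : Fin n)
    (hik : contrib u i = contrib u k)
    (h : ∀ S : Finset (Fin n), i ∉ S → k ∉ S →
      u (insert i S) - v (insert i S) ≥ u (insert k S) - v (insert k S)) :
    AP u i - AP v i ≥ AP u k - AP v k :=
  ap_RcParM_general n u v hc i k hik h
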